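/- arXiv:1503.02038 — 3 statements merged into one kernel-verified Lean document; each statement's English description precedes it below -/
import Mathlib

section
/- For ideals I_1, I_2 ⊆ R = ℂ[x_1,…,x_N]: the extension I_1R_0 is contained in the extension I_2R_0 if and only if D_0[I_2] ⊆ D_0[I_1]. Consequently the extension IR_0 of an ideal I is uniquely determined by its dual space D_0[I]. -/
open MvPolynomial

noncomputable section

/-- The polynomial ring `R = ℂ[x_1,…,x_N]`, with variables indexed by `Fin N`. -/
abbrev PolyR (N : ℕ) := MvPolynomial (Fin N) ℂ

/-- A dual functional `q = Σ_α c_α ∂^α` is encoded by its coefficient vector, i.e.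
by an element of `MvPolynomial (Fin N) ℂ` (which is exactly the space of finitely
supported functions `ℕ^N →₀ ℂ`).  Its application to a polynomial `f` is
`q(f) = Σ_α c_α · (coefficient of x^α in f)`. -/
def dapply {N : ℕ} (q f : PolyR N) : ℂ := ∑ α ∈ f.support, q.coeff α * f.coeff α

/-- The Macaulay dual space `D_0[I]` of an ideal `I`, as a `ℂ`-subspace of `D_0`. -/
def dualSpace {N : ℕ} (I : Ideal (PolyR N)) : Submodule ℂ (PolyR N) where
  carrier := {q | ∀ f ∈ I, dapply q f = 0}
  zero_mem' := by intro f _; simp [dapply]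
  add_mem' := by
    intro a b ha hb f hf
    have h : dapply (a + b) f = dapply a f + dapply b f := by
      simp [dapply, MvPolynomial.coeff_add, add_mul, Finset.sum_add_distrib]
    rw [h, ha f hf, hb f hf, add_zero]
  smul_mem' := by
    intro c q hq f hf
    have h : dapply (c • q) f = c * dapply q f := by
      simp [dapply, MvPolynomial.coeff_smul, Finset.mul_sum, mul_assoc]
    rw [h, hq f hf, mul_zero]

/-- The subspace of dual functionals all of whose exponents satisfy `P`. -/
def expSupported {N : ℕ} (P : (Fin N →₀ ℕ) → Prop) : Submodule ℂ (PolyR N) where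
  carrier := {q | ∀ α ∈ q.support, P α}
  zero_mem' := by simp
  add_mem' := by
    intro a b ha hb α hα
    rcases Finset.mem_union.mp (MvPolynomial.support_add hα) with h | h
    · exact ha α h
    · exact hb α h
  smul_mem' := by
    intro c q hq α hα
    exact hq α (MvPolynomial.support_smul hα)

/-- The truncated dual space `D_0^k[I]`: functionals in `D_0[I]` of order at most `k`
(in particular `0` belongs to it). -/
def truncDual {N : ℕ} (I : Ideal (PolyR N)) (k : ℕ) : Submodule ℂ (PolyR N) :=
  dualSpace I ⊓ expSupported (fun α => ∑ i, α i ≤ k)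

/-- The eliminating truncated dual space `E_0^d[I, A]`, where the set of variables `A`
is given by a finite set of indices: functionals in `D_0[I]` with `ord_A ≤ d`. -/
def elimDual {N : ℕ} (I : Ideal (PolyR N)) (A : Finset (Fin N)) (d : ℕ) :
    Submodule ℂ (PolyR N) :=
  dualSpace I ⊓ expSupported (fun α => ∑ i ∈ A, α i ≤ d)

open scoped Classical in
/-- The action `g · q` of the polynomial ring on dual functionals, determined by
`(g·q)(f) = q(g·f)`; concretely `g · ∂^α = Σ_{γ ≤ α} g_γ ∂^{α-γ}`. -/
def dmul {N : ℕ} (g q : PolyR N) : PolyR N :=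
  ∑ γ ∈ g.support, ∑ α ∈ q.support,
    if γ ≤ α then (MvPolynomial.monomial (α - γ)) (g.coeff γ * q.coeff α) else 0

/-- The maximal ideal `m = ⟨x_1,…,x_N⟩` of the origin. -/
def mIdeal (N : ℕ) : Ideal (PolyR N) := Ideal.span (Set.range MvPolynomial.X)

/-- The multiplicative set of polynomials not vanishing at the origin. -/
def atOrigin (N : ℕ) : Submonoid (PolyR N) where
  carrier := {g | MvPolynomial.constantCoeff g ≠ 0}
  one_mem' := by simp
  mul_mem' := by
    intro a b ha hb
    simp only [Set.mem_setOf_eq, map_mul]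
    exact mul_ne_zero ha hb

/-- The local ring `R_0` of the origin: the localization of `R` at the maximal ideal
of the origin. -/
abbrev LocR (N : ℕ) := Localization (atOrigin N)

/-- The extension `I·R_0` of an ideal `I ⊆ R` to the local ring of the origin. -/
def extIdeal {N : ℕ} (I : Ideal (PolyR N)) : Ideal (LocR N) :=
  Ideal.map (algebraMap (PolyR N) (LocR N)) I

/-- The contraction `I·R_0 ∩ R` of the extension of `I` back to `R`. -/
def contExt {N : ℕ} (I : Ideal (PolyR N)) : Ideal (PolyR N) :=
  Ideal.comap (algebraMap (PolyR N) (LocR N)) (extIdeal I)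

/-- The local Hilbert function
`H_I(k) = dim_ℂ R/(I + m^{k+1}) − dim_ℂ R/(I + m^k)`
(note that for `k = 0` the subtrahend vanishes since `m^0 = R`). -/
def hilb {N : ℕ} (I : Ideal (PolyR N)) (k : ℕ) : ℕ :=
  Module.finrank ℂ (PolyR N ⧸ (I + mIdeal N ^ (k + 1)))
    - Module.finrank ℂ (PolyR N ⧸ (I + mIdeal N ^ k))


/-!
A dual functional `q` has finite support, so it vanishes on `m ^ k` for large `k`; conversely,
every linear form on `R` vanishing on `I + m ^ k` is given by some `q ∈ D_0[I]`. Hence the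
polynomials killed by all of `D_0[I]` are exactly those in `⋂ k, I + m ^ k`. Krull's intersection
theorem on `R ⧸ I` identifies this intersection with `{f | ∃ g ∉ m, g * f ∈ I} = I R_0 ∩ R`, and
`I₁ R_0 ⊆ I₂ R_0` iff `I₁ ⊆ I₂ R_0 ∩ R`.
-/

namespace Ideal

variable {R : Type*} [CommRing R] {I m : Ideal R} {f : R}

theorem mem_sup_pow_of_mul_mem [m.IsMaximal] {g : R} (hg : g ∉ m) (hgf : g * f ∈ I) (k : ℕ) :
    f ∈ I ⊔ m ^ k := by
  obtain ⟨y, i, hi, hyi⟩ := IsMaximal.exists_inv_pow m hg k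
  have hf : f = y * (g * f) + i * f := by linear_combination (-f) * hyi
  rw [hf]
  exact add_mem (mem_sup_left (mul_mem_left _ _ hgf)) (mem_sup_right (mul_mem_right _ _ hi))

/-- Krull's intersection theorem, applied to the module `R ⧸ I`. -/
theorem exists_mul_mem_of_forall_mem_sup_pow [IsNoetherianRing R] (hm : m ≠ ⊤)
    (h : ∀ k, f ∈ I ⊔ m ^ k) : ∃ g ∉ m, g * f ∈ I := by
  have hmem : Quotient.mk I f ∈ (⨅ k : ℕ, m ^ k • ⊤ : Submodule R (R ⧸ I)) := by
    refine Submodule.mem_iInf _ |>.mpr fun k => ?_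
    rw [smul_top_eq_map, Submodule.restrictScalars_mem, Quotient.algebraMap_eq,
      mem_quotient_iff_mem_sup, sup_comm]
    exact h k
  obtain ⟨⟨r, hr⟩, hrf⟩ := (m.mem_iInf_smul_pow_eq_bot_iff _).mp hmem
  refine ⟨1 - r, fun h1 => hm ((eq_top_iff_one _).mpr (by simpa using add_mem h1 hr)), ?_⟩
  rw [← Quotient.eq_zero_iff_mem, map_mul, map_sub, map_one, sub_mul, one_mul, sub_eq_zero,
    ← Quotient.algebraMap_eq, ← Algebra.smul_def]
  exact hrf.symm

end Ideal

theorem MvPolynomial.idealOfVars_eq_ker_constantCoeff {σ R : Type*} [CommSemiring R] :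
    idealOfVars σ R = RingHom.ker constantCoeff := by
  ext p
  rw [← pow_one (idealOfVars σ R), mem_pow_idealOfVars_iff', RingHom.mem_ker, constantCoeff_eq]
  simp [Finsupp.degree_eq_zero_iff]

section MacaulayDuality

variable {N : ℕ}

instance mIdeal_isMaximal : (mIdeal N).IsMaximal := by
  rw [mIdeal, ← idealOfVars, idealOfVars_eq_ker_constantCoeff]
  exact RingHom.ker_isMaximal_of_surjective _ fun c => ⟨C c, constantCoeff_C _ c⟩

theorem mem_atOrigin_iff {g : PolyR N} : g ∈ atOrigin N ↔ g ∉ mIdeal N := by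
  rw [mIdeal, ← idealOfVars, idealOfVars_eq_ker_constantCoeff, RingHom.mem_ker]
  rfl

theorem mem_contExt_iff {I : Ideal (PolyR N)} {f : PolyR N} :
    f ∈ contExt I ↔ ∀ k, f ∈ I ⊔ mIdeal N ^ k := by
  rw [contExt, Ideal.mem_comap, extIdeal,
    IsLocalization.algebraMap_mem_map_algebraMap_iff (atOrigin N)]
  constructor
  · rintro ⟨g, hg, hgf⟩
    exact Ideal.mem_sup_pow_of_mul_mem (mem_atOrigin_iff.mp hg) hgf
  · intro h
    obtain ⟨g, hg, hgf⟩ := Ideal.exists_mul_mem_of_forall_mem_sup_pow Ideal.IsPrime.ne_top' h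
    exact ⟨g, mem_atOrigin_iff.mpr hg, hgf⟩

theorem dapply_eq_sum_of_support_subset {q f : PolyR N} {s : Finset (Fin N →₀ ℕ)}
    (hs : q.support ⊆ s) : dapply q f = ∑ α ∈ s, q.coeff α * f.coeff α := by
  calc dapply q f = ∑ α ∈ s ∪ f.support, q.coeff α * f.coeff α :=
        Finset.sum_subset Finset.subset_union_right fun α _ hα => by
          rw [notMem_support_iff.mp hα, mul_zero]
    _ = ∑ α ∈ s, q.coeff α * f.coeff α :=
        (Finset.sum_subset Finset.subset_union_left fun α _ hα => by
          rw [notMem_support_iff.mp fun h => hα (hs h), zero_mul]).symm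

theorem dapply_add_right (q f g : PolyR N) : dapply q (f + g) = dapply q f + dapply q g := by
  simp only [dapply_eq_sum_of_support_subset (subset_refl q.support), coeff_add, mul_add,
    Finset.sum_add_distrib]

theorem dapply_eq_zero_of_mem_pow {q f : PolyR N} {k : ℕ} (hq : ∀ α ∈ q.support, α.degree < k)
    (hf : f ∈ mIdeal N ^ k) : dapply q f = 0 := by
  rw [dapply_eq_sum_of_support_subset (subset_refl q.support)]
  exact Finset.sum_eq_zero fun α hα => by
    rw [(mem_pow_idealOfVars_iff' k f).mp hf α (hq α hα), mul_zero]

theorem exists_dapply_eq_of_forall_mem_pow (φ : PolyR N →ₗ[ℂ] ℂ) {k : ℕ}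
    (hφ : ∀ g ∈ mIdeal N ^ k, φ g = 0) : ∃ q : PolyR N, ∀ g, dapply q g = φ g := by
  set S := (Finsupp.finite_of_degree_lt (σ := Fin N) k).toFinset
  set q := ∑ β ∈ S, monomial β (φ (monomial β 1))
  have hq : ∀ α, q.coeff α = φ (monomial α 1) := by
    intro α
    simp only [q, coeff_sum, coeff_monomial, Finset.sum_ite_eq', S, Set.Finite.mem_toFinset,
      Set.mem_ofPred_eq, ite_eq_left_iff, not_lt]
    exact fun hα => (hφ _ ((monomial_mem_pow_idealOfVars_iff k α one_ne_zero).mpr hα)).symm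
  refine ⟨q, fun g => ?_⟩
  conv_rhs => rw [g.as_sum, map_sum]
  refine Finset.sum_congr rfl fun α _ => ?_
  have hmono : monomial α (g.coeff α) = g.coeff α • monomial α (1 : ℂ) := by
    rw [smul_monomial, smul_eq_mul, mul_one]
  rw [hq, hmono, map_smul, smul_eq_mul, mul_comm]

theorem forall_dapply_eq_zero_iff {I : Ideal (PolyR N)} {f : PolyR N} :
    (∀ q ∈ dualSpace I, dapply q f = 0) ↔ ∀ k, f ∈ I ⊔ mIdeal N ^ k := by
  constructor
  · intro h k
    by_contra hf
    obtain ⟨φ, hφf, hφ⟩ := Submodule.exists_dual_map_eq_bot_of_notMem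
      (p := (I ⊔ mIdeal N ^ k).restrictScalars ℂ) hf inferInstance
    have hφ' : ∀ g ∈ I ⊔ mIdeal N ^ k, φ g = 0 := fun g hg =>
      (Submodule.mem_bot ℂ).mp (hφ ▸ Submodule.mem_map_of_mem hg)
    obtain ⟨q, hq⟩ :=
      exists_dapply_eq_of_forall_mem_pow φ fun g hg => hφ' g (Ideal.mem_sup_right hg)
    exact hφf (hq f ▸ h q fun g hg => (hq g).trans (hφ' g (Ideal.mem_sup_left hg)))
  · intro h q hq
    obtain ⟨a, ha, b, hb, rfl⟩ := Submodule.mem_sup.mp (h (q.support.sup Finsupp.degree + 1))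
    rw [dapply_add_right, hq a ha, zero_add]
    exact dapply_eq_zero_of_mem_pow (fun α hα => Nat.lt_succ_of_le (Finset.le_sup hα)) hb

theorem dualSpace_le_dualSpace_iff {I₁ I₂ : Ideal (PolyR N)} :
    dualSpace I₂ ≤ dualSpace I₁ ↔ I₁ ≤ contExt I₂ := by
  simp only [SetLike.le_def, mem_contExt_iff, ← forall_dapply_eq_zero_iff]
  exact ⟨fun h f hf q hq => h hq f hf, fun h q hq f hf => h hf q hq⟩

theorem extIdeal_le_extIdeal_iff {I₁ I₂ : Ideal (PolyR N)} :
    extIdeal I₁ ≤ extIdeal I₂ ↔ dualSpace I₂ ≤ dualSpace I₁ :=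
  Ideal.map_le_iff_le_comap.trans dualSpace_le_dualSpace_iff.symm

end MacaulayDuality

theorem statement2_general {N : ℕ} (I₁ I₂ : Ideal (PolyR N)) :
    (extIdeal I₁ ≤ extIdeal I₂ ↔ dualSpace I₂ ≤ dualSpace I₁) ∧
    (dualSpace I₁ = dualSpace I₂ → extIdeal I₁ = extIdeal I₂) :=
  ⟨extIdeal_le_extIdeal_iff, fun h =>
    le_antisymm (extIdeal_le_extIdeal_iff.mpr h.ge) (extIdeal_le_extIdeal_iff.mpr h.le)⟩

/-- `I₁·R_0 ⊆ I₂·R_0` iff `D_0[I₂] ⊆ D_0[I₁]`; consequently the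
extension `I·R_0` is uniquely determined by the dual space `D_0[I]`. -/
theorem statement2 {N : ℕ} (hN : 1 ≤ N) (I₁ I₂ : Ideal (PolyR N)) :
    (extIdeal I₁ ≤ extIdeal I₂ ↔ dualSpace I₂ ≤ dualSpace I₁) ∧
    (dualSpace I₁ = dualSpace I₂ → extIdeal I₁ = extIdeal I₂) :=
  statement2_general I₁ I₂
end
end

section
/- For ideals I_1, I_2 ⊆ R = ℂ[x_1,…,x_N]: (a) D_0[I_1 + I_2] = D_0[I_1] ∩ D_0[I_2], and (b) D_0[I_1 ∩ I_2] = D_0[I_1] + D_0[I_2] (sum of ℂ-subspaces of D_0). -/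
open MvPolynomial

noncomputable section

/-!
Pairing `q ∈ D_0` with `R` identifies `D_0[I]` with the linear functionals on `R` that kill `I`
and are finitely supported; a functional is finitely supported iff it kills some power of
`m = (x_1, …, x_N)`. Part (a) is then the annihilator of a sum. For (b), a `q` of order `k`
killing `I₁ ∩ I₂` kills `(I₁ ∩ I₂) + m^(k+1)`, which by Artin–Rees contains `(I₁ + m^M) ∩ I₂`
for large `M`. Linear algebra over all functionals splits `q = q₁ + q₂` with `q₁ ⊥ I₁ + m^M`
and `q₂ ⊥ I₂`; then `q₁` kills `m^M`, so it lies in `D_0`, and hence so does `q₂ = q - q₁`.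
-/

namespace Ideal

variable {R : Type*} [CommRing R] [IsNoetherianRing R]

theorem exists_pow_inf_le_pow_mul (𝔪 K : Ideal R) (n : ℕ) : ∃ M, 𝔪 ^ M ⊓ K ≤ 𝔪 ^ n * K := by
  obtain ⟨c, hc⟩ := exists_pow_inf_eq_pow_smul 𝔪 (K : Submodule R R)
  refine ⟨n + c, ?_⟩
  have h := hc (n + c) (Nat.le_add_left c n)
  rw [Nat.add_sub_cancel, smul_eq_mul, mul_top] at h
  rw [h, smul_eq_mul]
  exact mul_mono_right inf_le_right

theorem exists_sup_pow_inf_le (I J 𝔪 : Ideal R) (n : ℕ) :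
    ∃ M, (I ⊔ 𝔪 ^ M) ⊓ J ≤ (I ⊓ J) ⊔ 𝔪 ^ n := by
  obtain ⟨M, hM⟩ := exists_pow_inf_le_pow_mul 𝔪 (I ⊔ J) n
  refine ⟨M, fun z hz => ?_⟩
  obtain ⟨hzI, hzJ⟩ := Submodule.mem_inf.mp hz
  obtain ⟨a, ha, u, hu, hau⟩ := Submodule.mem_sup.mp hzI
  have hu' : u ∈ 𝔪 ^ n * I ⊔ 𝔪 ^ n * J := by
    rw [← mul_sup]
    refine hM (Submodule.mem_inf.mpr ⟨hu, ?_⟩)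
    rw [show u = z - a by rw [← hau]; ring]
    exact sub_mem (mem_sup_right hzJ) (mem_sup_left ha)
  obtain ⟨b, hb, c, hc, hbc⟩ := Submodule.mem_sup.mp hu'
  have habJ : a + b ∈ J := by
    rw [show a + b = z - c by rw [← hau, ← hbc]; ring]
    exact sub_mem hzJ (Ideal.mul_le_right hc)
  rw [show z = (a + b) + c by rw [← hau, ← hbc]; ring]
  have habI : a + b ∈ I := add_mem ha (Ideal.mul_le_right hb)
  exact Submodule.add_mem_sup (Submodule.mem_inf.mpr ⟨habI, habJ⟩) (Ideal.mul_le_left hc)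

end Ideal

section MacaulayDual

variable {N : ℕ}

theorem dapply_eq_sum_left (q f : PolyR N) :
    dapply q f = ∑ α ∈ q.support, q.coeff α * f.coeff α := by
  have hunion : dapply q f = ∑ α ∈ q.support ∪ f.support, q.coeff α * f.coeff α :=
    Finset.sum_subset Finset.subset_union_right fun α _ hα => by
      rw [notMem_support_iff.mp hα, mul_zero]
  rw [hunion]
  exact (Finset.sum_subset Finset.subset_union_left fun α _ hα => by
    rw [notMem_support_iff.mp hα, zero_mul]).symm

def dualPairing (N : ℕ) : PolyR N →ₗ[ℂ] Module.Dual ℂ (PolyR N) :=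
  LinearMap.mk₂ ℂ dapply
    (fun q r f => by simp only [dapply, coeff_add, add_mul, Finset.sum_add_distrib])
    (fun c q f => by simp only [dapply, coeff_smul, smul_eq_mul, Finset.mul_sum, mul_assoc])
    (fun q f g => by simp only [dapply_eq_sum_left, coeff_add, mul_add, Finset.sum_add_distrib])
    (fun c q f => by
      simp only [dapply_eq_sum_left, coeff_smul, smul_eq_mul, Finset.mul_sum, mul_left_comm])

@[simp]
theorem dualPairing_apply (q f : PolyR N) : dualPairing N q f = dapply q f := rfl

theorem dualSpace_eq_comap (I : Ideal (PolyR N)) :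
    dualSpace I = (I.restrictScalars ℂ).dualAnnihilator.comap (dualPairing N) :=
  Submodule.ext fun q => by rw [Submodule.mem_comap, Submodule.mem_dualAnnihilator]; rfl

theorem dualSpace_antitone : Antitone (dualSpace (N := N)) :=
  fun _ _ h _ hq f hf => hq f (h hf)

theorem dualSpace_sup (I J : Ideal (PolyR N)) :
    dualSpace (I ⊔ J) = dualSpace I ⊓ dualSpace J := by
  simp only [dualSpace_eq_comap, Submodule.restrictScalars_sup,
    Submodule.dualAnnihilator_sup_eq, Submodule.comap_inf]

theorem mem_dualSpace_pow_totalDegree (q : PolyR N) :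
    q ∈ dualSpace (mIdeal N ^ (q.totalDegree + 1)) := by
  intro f hf
  rw [dapply_eq_sum_left]
  refine Finset.sum_eq_zero fun α hα => ?_
  rw [(mem_pow_idealOfVars_iff' _ f).mp hf α (Nat.lt_succ_of_le (le_totalDegree hα)), mul_zero]

theorem dualAnnihilator_pow_le_range_dualPairing (M : ℕ) :
    ((mIdeal N ^ M).restrictScalars ℂ).dualAnnihilator ≤ LinearMap.range (dualPairing N) := by
  classical
  intro φ hφ
  rw [Submodule.mem_dualAnnihilator] at hφ
  set S := (Finsupp.finite_of_degree_le (σ := Fin N) M).toFinset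
  set q : PolyR N := ∑ β ∈ S, monomial β (φ (monomial β 1))
  have hcoeff : ∀ α, q.coeff α = φ (monomial α 1) := by
    intro α
    rw [coeff_sum]
    simp only [coeff_monomial]
    rw [Finset.sum_ite_eq']
    split_ifs with h
    · rfl
    · refine (hφ _ ((monomial_mem_pow_idealOfVars_iff _ _ one_ne_zero).mpr ?_)).symm
      simp only [S, Set.Finite.mem_toFinset, Set.mem_ofPred_eq, not_le] at h
      exact h.le
  refine ⟨q, LinearMap.ext fun f => ?_⟩
  calc dualPairing N q f = ∑ α ∈ f.support, φ (f.coeff α • monomial α 1) := by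
        simp only [dualPairing_apply, dapply, hcoeff, map_smul, smul_eq_mul, mul_comm]
    _ = φ f := by
        simp only [← map_sum, smul_monomial, smul_eq_mul, mul_one, support_sum_monomial_coeff]

theorem dualSpace_inf_le_sup_of_pow_le {J₁ J₂ : Ideal (PolyR N)} {M : ℕ}
    (hJ₁ : mIdeal N ^ M ≤ J₁) : dualSpace (J₁ ⊓ J₂) ≤ dualSpace J₁ ⊔ dualSpace J₂ := by
  intro q hq
  rw [dualSpace_eq_comap, Submodule.mem_comap, Submodule.restrictScalars_inf,
    Subspace.dualAnnihilator_inf_eq] at hq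
  obtain ⟨φ₁, hφ₁, φ₂, hφ₂, hφ⟩ := Submodule.mem_sup.mp hq
  obtain ⟨q₁, rfl⟩ := dualAnnihilator_pow_le_range_dualPairing M
    (Submodule.dualAnnihilator_anti (Submodule.restrictScalars_mono ℂ hJ₁) hφ₁)
  refine Submodule.mem_sup.mpr ⟨q₁, ?_, q - q₁, ?_, add_sub_cancel q₁ q⟩
  · rwa [dualSpace_eq_comap]
  · rwa [dualSpace_eq_comap, Submodule.mem_comap, map_sub, ← hφ, add_sub_cancel_left]

theorem dualSpace_inf_le_sup (I₁ I₂ : Ideal (PolyR N)) :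
    dualSpace (I₁ ⊓ I₂) ≤ dualSpace I₁ ⊔ dualSpace I₂ := by
  intro q hq
  obtain ⟨M, hM⟩ := Ideal.exists_sup_pow_inf_le I₁ I₂ (mIdeal N) (q.totalDegree + 1)
  have hq' : q ∈ dualSpace ((I₁ ⊔ mIdeal N ^ M) ⊓ I₂) := by
    refine dualSpace_antitone hM ?_
    rw [dualSpace_sup]
    exact ⟨hq, mem_dualSpace_pow_totalDegree q⟩
  exact sup_le_sup_right (dualSpace_antitone le_sup_left) _
    (dualSpace_inf_le_sup_of_pow_le le_sup_right hq')

end MacaulayDual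

theorem statement7_general {N : ℕ} (I₁ I₂ : Ideal (PolyR N)) :
    dualSpace (I₁ + I₂) = dualSpace I₁ ⊓ dualSpace I₂ ∧
    dualSpace (I₁ ⊓ I₂) = dualSpace I₁ ⊔ dualSpace I₂ :=
  ⟨dualSpace_sup I₁ I₂, (dualSpace_inf_le_sup I₁ I₂).antisymm
    (sup_le (dualSpace_antitone inf_le_left) (dualSpace_antitone inf_le_right))⟩

/-- `D_0[I₁ + I₂] = D_0[I₁] ∩ D_0[I₂]` and
`D_0[I₁ ∩ I₂] = D_0[I₁] + D_0[I₂]`. -/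
theorem statement7 {N : ℕ} (hN : 1 ≤ N) (I₁ I₂ : Ideal (PolyR N)) :
    dualSpace (I₁ + I₂) = dualSpace I₁ ⊓ dualSpace I₂ ∧
    dualSpace (I₁ ⊓ I₂) = dualSpace I₁ ⊔ dualSpace I₂ :=
  statement7_general I₁ I₂
end
end

section
/- Let ⪯ be a monomial order on ℕ^N. For every ideal I ⊆ R = ℂ[x_1,…,x_N], the lattice ℕ^N is the disjoint union of in(D_0[I]) (the dual initial exponents of the dual space of I) and in(I) (the local initial exponents of I). -/
open MvPolynomial

noncomputable section

/-- Given a monomial order `le` on `ℕ^N`, the set of local initial exponents of an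
ideal `I`: `in(f)` is the `le`-smallest exponent in the support of a nonzero
`f ∈ I` (the initial term for the local order opposite to `le`). -/
def localIn {N : ℕ} (le : (Fin N →₀ ℕ) → (Fin N →₀ ℕ) → Prop)
    (I : Ideal (PolyR N)) : Set (Fin N →₀ ℕ) :=
  {α | ∃ f ∈ I, f ≠ 0 ∧ α ∈ f.support ∧ ∀ β ∈ f.support, le α β}

/-- Given a monomial order `le` on `ℕ^N`, the set of dual initial exponents of a
subspace `L ⊆ D_0`: `in(q)` is the `le`-largest exponent in the support of a
nonzero `q ∈ L`. -/
def dualIn {N : ℕ} (le : (Fin N →₀ ℕ) → (Fin N →₀ ℕ) → Prop)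
    (L : Submodule ℂ (PolyR N)) : Set (Fin N →₀ ℕ) :=
  {α | ∃ q ∈ L, q ≠ 0 ∧ α ∈ q.support ∧ ∀ β ∈ q.support, le β α}

/-!
If every exponent of `q` is `⪯ α` and every exponent of `f` is `⪰ α`, then `q(f) = q_α f_α`;
so a dual initial exponent of `D_0[I]` is never a local initial exponent of `I`.

Conversely, let `α ∉ in(I)` and let `M_α` (`idealAbove`) be the monomial ideal spanned by the
`x^β` with `β ≻ α`. Then `x^α ∉ I + M_α`, since `x^α - g` with `g ∈ M_α` has local initial
exponent `α`. If `x^α ∈ I + M_α + m^k` for every `k`, the Krull intersection theorem in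
`R/(I + M_α)` gives `r ∈ m` with `(1 - r) x^α ∈ I + M_α`; since `r x^α ∈ M_α`, this is
impossible. So `x^α ∉ K := I + M_α + m^k` for some `k`, and a linear form
vanishing on `K` but not at `x^α` is, because `m^k ⊆ K`, given by a dual functional `q ∈ D_0[I]`.
Its exponents `β` satisfy `x^β ∉ M_α`, i.e. `β ⪯ α`, and `q_α ≠ 0`, so `in(q) = α`.
-/

theorem Ideal.exists_mem_sub_mul_mem_of_forall_mem_sup_pow {R : Type*} [CommRing R]
    [IsNoetherianRing R] (J m : Ideal R) {x : R} (hx : ∀ k : ℕ, x ∈ J ⊔ m ^ k) :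
    ∃ r ∈ m, r * x - x ∈ J := by
  have hmem : J.mkQ x ∈ (⨅ k : ℕ, m ^ k • ⊤ : Submodule R (R ⧸ J)) := by
    refine Submodule.mem_iInf _ |>.2 fun k => ?_
    rw [← Submodule.range_mkQ J, LinearMap.range_eq_map, ← Submodule.map_smul'', smul_eq_mul,
      Ideal.mul_top, ← Submodule.mem_comap, Submodule.comap_map_mkQ]
    exact hx k
  obtain ⟨⟨r, hr⟩, hrx⟩ := (Ideal.mem_iInf_smul_pow_eq_bot_iff m _).1 hmem
  refine ⟨r, hr, ?_⟩
  rw [← Submodule.Quotient.mk_eq_zero, Submodule.Quotient.mk_sub, ← smul_eq_mul,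
    Submodule.Quotient.mk_smul]
  exact sub_eq_zero.2 hrx

section MonomialOrder

variable {σ R : Type*} {le : (σ →₀ ℕ) → (σ →₀ ℕ) → Prop}

theorem rel_self_add (hzero : ∀ α, le 0 α) (hadd : ∀ α β γ, le α β → le (α + γ) (β + γ))
    (α γ : σ →₀ ℕ) : le α (α + γ) := by
  simpa [add_comm] using hadd 0 γ α (hzero γ)

theorem isUpperSet_setOf_not_rel [IsTrans _ le] (hzero : ∀ α, le 0 α)
    (hadd : ∀ α β γ, le α β → le (α + γ) (β + γ)) (α : σ →₀ ℕ) :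
    IsUpperSet {β | ¬ le β α} := by
  rintro δ β hδβ hδ hβ
  obtain ⟨γ, rfl⟩ := exists_add_of_le hδβ
  exact hδ (trans_of le (rel_self_add hzero hadd δ γ) hβ)

variable [CommSemiring R]

def idealAbove [IsTrans _ le] (hzero : ∀ α, le 0 α)
    (hadd : ∀ α β γ, le α β → le (α + γ) (β + γ)) (α : σ →₀ ℕ) : Ideal (MvPolynomial σ R) :=
  restrictSupportIdeal R _ (isUpperSet_setOf_not_rel hzero hadd α)

variable [IsTrans _ le] {hzero : ∀ α, le 0 α} {hadd : ∀ α β γ, le α β → le (α + γ) (β + γ)}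

theorem mem_idealAbove {α : σ →₀ ℕ} {f : MvPolynomial σ R} :
    f ∈ idealAbove hzero hadd α ↔ ∀ β ∈ f.support, ¬ le β α :=
  Iff.rfl

theorem monomial_one_mem_idealAbove [Nontrivial R] {α β : σ →₀ ℕ} :
    monomial β (1 : R) ∈ idealAbove hzero hadd α ↔ ¬ le β α := by
  rw [idealAbove, ← Submodule.restrictScalars_mem R, restrictScalars_restrictSupportIdeal,
    monomial_mem_restrictSupport]
  simp

theorem mul_monomial_mem_idealAbove [Nontrivial R] [Std.Antisymm le] {α : σ →₀ ℕ}
    {r : MvPolynomial σ R} (hr : r ∈ idealOfVars σ R) :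
    r * monomial α 1 ∈ idealAbove hzero hadd α := by
  suffices idealOfVars σ R ≤ (idealAbove hzero hadd α).colon {monomial α 1} from
    Submodule.mem_colon_singleton.1 (this hr)
  refine Ideal.span_le.2 <| Set.range_subset_iff.2 fun i => ?_
  rw [SetLike.mem_coe, Submodule.mem_colon_singleton, smul_eq_mul, X, monomial_mul, one_mul,
    add_comm, monomial_one_mem_idealAbove]
  exact fun h => by simpa using antisymm_of le h (rel_self_add hzero hadd α _)

end MonomialOrder

variable {N : ℕ}

theorem mIdeal_eq_idealOfVars : mIdeal N = idealOfVars (Fin N) ℂ := rfl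

theorem dapply_monomial (q : PolyR N) (β : Fin N →₀ ℕ) (c : ℂ) :
    dapply q (monomial β c) = q.coeff β * c := by
  classical
  by_cases hc : c = 0
  · simp [dapply, hc]
  · simp [dapply, support_monomial, hc]

theorem dapply_eq_of_coeff_eq (φ : Module.Dual ℂ (PolyR N)) {q : PolyR N}
    (hq : ∀ β, q.coeff β = φ (monomial β 1)) (f : PolyR N) : dapply q f = φ f := by
  conv_rhs => rw [← f.support_sum_monomial_coeff]
  simp only [dapply, map_sum, hq]
  refine Finset.sum_congr rfl fun β _ => ?_
  rw [mul_comm, ← smul_eq_mul, ← map_smul, smul_monomial, smul_eq_mul, mul_one]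

theorem dualSpace_anti {I K : Ideal (PolyR N)} (h : I ≤ K) : dualSpace K ≤ dualSpace I :=
  fun _ hq f hf => hq f (h hf)

theorem exists_mem_dualSpace_of_notMem {K : Ideal (PolyR N)} {k : ℕ} (hK : mIdeal N ^ k ≤ K)
    {f : PolyR N} (hf : f ∉ K) :
    ∃ q ∈ dualSpace K, dapply q f ≠ 0 ∧ ∀ β ∈ q.support, monomial β 1 ∉ K := by
  obtain ⟨φ, hφf, hφK⟩ :=
    Submodule.exists_dual_map_eq_bot_of_notMem (p := K.restrictScalars ℂ) hf inferInstance
  have hφ : ∀ g ∈ K, φ g = 0 := fun g hg => LinearMap.le_ker_iff_map.2 hφK hg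
  have hfin : {β | φ (monomial β 1) ≠ 0}.Finite := by
    refine (Finsupp.finite_of_degree_lt k).subset fun β hβ => ?_
    by_contra hdeg
    refine hβ (hφ _ (hK ?_))
    rw [mIdeal_eq_idealOfVars, monomial_mem_pow_idealOfVars_iff _ _ one_ne_zero]
    exact not_lt.1 hdeg
  let q : PolyR N := AddMonoidAlgebra.ofCoeff (Finsupp.ofSupportFinite _ hfin)
  have hq : ∀ β, q.coeff β = φ (monomial β 1) := fun β => rfl
  refine ⟨q, fun g hg => (dapply_eq_of_coeff_eq φ hq g).trans (hφ g hg), ?_, fun β hβ hβK => ?_⟩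
  · rwa [dapply_eq_of_coeff_eq φ hq]
  · exact mem_support_iff.1 hβ ((hq β).trans (hφ _ hβK))

section InitialExponents

variable {le : (Fin N →₀ ℕ) → (Fin N →₀ ℕ) → Prop}

theorem dapply_eq_coeff_mul_coeff [Std.Antisymm le] {q f : PolyR N} {α : Fin N →₀ ℕ}
    (hq : ∀ β ∈ q.support, le β α) (hf : ∀ β ∈ f.support, le α β) :
    dapply q f = q.coeff α * f.coeff α := by
  refine Finset.sum_eq_single α (fun β hβ hβα => ?_) fun hα => by
    rw [notMem_support_iff.1 hα, mul_zero]
  rw [notMem_support_iff.1 fun hβq => hβα (antisymm_of le (hq β hβq) (hf β hβ)), zero_mul]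

theorem disjoint_dualIn_localIn [Std.Antisymm le] (I : Ideal (PolyR N)) :
    Disjoint (dualIn le (dualSpace I)) (localIn le I) := by
  refine Set.disjoint_left.2 fun α ⟨q, hqI, _, hqα, hq⟩ ⟨f, hfI, _, hfα, hf⟩ => ?_
  refine mul_ne_zero (mem_support_iff.1 hqα) (mem_support_iff.1 hfα) ?_
  rw [← dapply_eq_coeff_mul_coeff hq hf]
  exact hqI f hfI

section

variable [IsLinearOrder _ le] {hzero : ∀ α, le 0 α}
  {hadd : ∀ α β γ, le α β → le (α + γ) (β + γ)}

theorem monomial_notMem_sup_idealAbove {I : Ideal (PolyR N)} {α : Fin N →₀ ℕ}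
    (hα : α ∉ localIn le I) : monomial α 1 ∉ I ⊔ idealAbove hzero hadd α := by
  intro h
  obtain ⟨f, hfI, g, hg, hfg⟩ := Submodule.mem_sup.1 h
  have hgα : g.coeff α = 0 :=
    notMem_support_iff.1 fun hα => mem_idealAbove.1 hg α hα (refl_of le α)
  have hf : f = monomial α 1 - g := eq_sub_of_add_eq hfg
  have hfα : f.coeff α = 1 := by simp [hf, hgα]
  refine hα ⟨f, hfI, fun h0 => by simp [h0] at hfα, mem_support_iff.2 (by simp [hfα]),
    fun β hβ => ?_⟩
  rcases eq_or_ne β α with rfl | hβα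
  · exact refl_of le β
  · have hgβ : β ∈ g.support := by
      rw [mem_support_iff] at hβ ⊢
      simpa [hf, coeff_monomial, hβα.symm] using hβ
    exact (total_of le α β).resolve_right (mem_idealAbove.1 hg β hgβ)

theorem exists_monomial_notMem_sup_pow {I : Ideal (PolyR N)} {α : Fin N →₀ ℕ}
    (hα : α ∉ localIn le I) :
    ∃ k, monomial α 1 ∉ I ⊔ idealAbove hzero hadd α ⊔ mIdeal N ^ k := by
  by_contra! h
  obtain ⟨r, hr, hrx⟩ := Ideal.exists_mem_sub_mul_mem_of_forall_mem_sup_pow _ _ h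
  have hx := sub_mem (Ideal.mem_sup_right (mul_monomial_mem_idealAbove hr)) hrx
  rw [sub_sub_cancel] at hx
  exact monomial_notMem_sup_idealAbove hα hx

end

theorem mem_dualIn_of_notMem_localIn [IsLinearOrder _ le] (hzero : ∀ α, le 0 α)
    (hadd : ∀ α β γ, le α β → le (α + γ) (β + γ)) {I : Ideal (PolyR N)} {α : Fin N →₀ ℕ}
    (hα : α ∉ localIn le I) : α ∈ dualIn le (dualSpace I) := by
  obtain ⟨k, hk⟩ := exists_monomial_notMem_sup_pow (hzero := hzero) (hadd := hadd) hα
  obtain ⟨q, hqK, hqα, hq⟩ := exists_mem_dualSpace_of_notMem le_sup_right hk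
  rw [dapply_monomial, mul_one] at hqα
  refine ⟨q, dualSpace_anti (le_sup_left.trans le_sup_left) hqK, ne_zero_iff.2 ⟨α, hqα⟩,
    mem_support_iff.2 hqα, fun β hβ => ?_⟩
  by_contra h
  exact hq β hβ (Ideal.mem_sup_left (Ideal.mem_sup_right (monomial_one_mem_idealAbove.2 h)))

end InitialExponents

theorem statement12_general {N : ℕ}
    (le : (Fin N →₀ ℕ) → (Fin N →₀ ℕ) → Prop)
    (hlin : IsLinearOrder (Fin N →₀ ℕ) le)
    (hzero : ∀ α, le 0 α)
    (hadd : ∀ α β γ, le α β → le (α + γ) (β + γ))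
    (I : Ideal (PolyR N)) :
    dualIn le (dualSpace I) = (localIn le I)ᶜ :=
  Set.ext fun _ => ⟨fun h => (disjoint_dualIn_localIn I).notMem_of_mem_left h,
    mem_dualIn_of_notMem_localIn hzero hadd⟩

/-- For a monomial order `le` on `ℕ^N` and any ideal `I ⊆ R`, the
lattice `ℕ^N` is the disjoint union of `in(D_0[I])` and `in(I)`. -/
theorem statement12 {N : ℕ} (hN : 1 ≤ N)
    (le : (Fin N →₀ ℕ) → (Fin N →₀ ℕ) → Prop)
    (hlin : IsLinearOrder (Fin N →₀ ℕ) le)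
    (hzero : ∀ α, le 0 α)
    (hadd : ∀ α β γ, le α β → le (α + γ) (β + γ))
    (I : Ideal (PolyR N)) :
    dualIn le (dualSpace I) = (localIn le I)ᶜ :=
  statement12_general le hlin hzero hadd I
end
end
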